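/- Suppose min{‖Xb‖₂ : ‖b_S‖₁ − ‖b_{−S}‖₁ = 1} > 0. Then for any minimizer b* of ‖Xb‖₂ over {b : ‖b_S‖₁ − ‖b_{−S}‖₁ = 1}, every coordinate b*_j with j ∈ S is nonzero. -/

import Mathlib

/-!
If `b*ⱼ = 0` for some `j ∈ S`, replace it by a small `t` of sign opposite to `⟨X b*, X eⱼ⟩` and
divide by `1 + |t|`; this is feasible again, since the constraint value of `b* + t eⱼ` is `1 + |t|`.
Now `‖X (b* + t eⱼ)‖² ≤ ‖X b*‖² + t² ‖X eⱼ‖²`, which for small `t` is below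
`(1 + |t|)² ‖X b*‖²` because the minimum `‖X b*‖` is positive: the rescaled vector beats `b*`.
-/

open Finset

noncomputable def l1 {p : ℕ} (b : Fin p → ℝ) : ℝ := ∑ j, |b j|

def restr {p : ℕ} (S : Finset (Fin p)) (b : Fin p → ℝ) : Fin p → ℝ :=
  fun j => if j ∈ S then b j else 0

noncomputable def qf {n p : ℕ} (X : Matrix (Fin n) (Fin p) ℝ) (b : Fin p → ℝ) : ℝ :=
  ∑ i, (X.mulVec b i) ^ 2

/-- The compatibility constant κ̂(v,S) (square root of the minimal value). -/
noncomputable def kappaHat {n p : ℕ} (X : Matrix (Fin n) (Fin p) ℝ) (S : Finset (Fin p))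
    (v : ℝ) : ℝ :=
  Real.sqrt (sInf {c : ℝ | ∃ b : Fin p → ℝ,
    l1 (restr S b) - v * l1 (restr Sᶜ b) = 1 ∧ c = (S.card : ℝ) * qf X b / n})

open Matrix

section L1

variable {p : ℕ}

lemma l1_smul (c : ℝ) (b : Fin p → ℝ) : l1 (c • b) = |c| * l1 b := by
  simp [l1, abs_mul, Finset.mul_sum]

lemma l1_add_single {v : Fin p → ℝ} {j : Fin p} (hvj : v j = 0) (t : ℝ) :
    l1 (v + Pi.single j t) = l1 v + |t| := by
  have hsplit (k : Fin p) :
      |(v + Pi.single j t : Fin p → ℝ) k| = |v k| + |(Pi.single j t : Fin p → ℝ) k| := by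
    by_cases hk : k = j
    · subst hk; simp [hvj]
    · simp [hk]
  rw [l1, l1, Finset.sum_congr rfl fun k _ => hsplit k, Finset.sum_add_distrib]
  simp [Pi.single_apply, apply_ite]

lemma restr_smul (S : Finset (Fin p)) (c : ℝ) (b : Fin p → ℝ) :
    restr S (c • b) = c • restr S b := by
  funext k; by_cases hk : k ∈ S <;> simp [restr, hk]

lemma restr_add (S : Finset (Fin p)) (b v : Fin p → ℝ) :
    restr S (b + v) = restr S b + restr S v := by
  funext k; by_cases hk : k ∈ S <;> simp [restr, hk]

lemma restr_single_of_mem {S : Finset (Fin p)} {j : Fin p} (hj : j ∈ S) (t : ℝ) :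
    restr S (Pi.single j t) = Pi.single j t := by
  funext k; by_cases hk : k = j
  · subst hk; simp [restr, hj]
  · simp [restr, hk]

lemma restr_single_of_notMem {S : Finset (Fin p)} {j : Fin p} (hj : j ∉ S) (t : ℝ) :
    restr S (Pi.single j t) = 0 := by
  funext k; by_cases hk : k = j
  · subst hk; simp [restr, hj]
  · simp [restr, hk]

lemma l1_restr_sub_l1_restr_compl_smul (S : Finset (Fin p)) {c : ℝ} (hc : 0 ≤ c)
    (b : Fin p → ℝ) :
    l1 (restr S (c • b)) - l1 (restr Sᶜ (c • b)) = c * (l1 (restr S b) - l1 (restr Sᶜ b)) := by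
  rw [restr_smul, restr_smul, l1_smul, l1_smul, abs_of_nonneg hc, mul_sub]

lemma l1_restr_sub_l1_restr_compl_add_single {S : Finset (Fin p)} {b : Fin p → ℝ} {j : Fin p}
    (hj : j ∈ S) (hbj : b j = 0) (t : ℝ) :
    l1 (restr S (b + Pi.single j t)) - l1 (restr Sᶜ (b + Pi.single j t))
      = l1 (restr S b) - l1 (restr Sᶜ b) + |t| := by
  have hrestr : restr S b j = 0 := by simp [restr, hbj]
  rw [restr_add, restr_add, restr_single_of_mem hj, restr_single_of_notMem (by simpa using hj),
    add_zero, l1_add_single hrestr]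
  ring

end L1

section QuadraticForm

variable {n p : ℕ} (X : Matrix (Fin n) (Fin p) ℝ)

lemma qf_nonneg (b : Fin p → ℝ) : 0 ≤ qf X b :=
  Finset.sum_nonneg fun _ _ => sq_nonneg _

lemma qf_smul (c : ℝ) (b : Fin p → ℝ) : qf X (c • b) = c ^ 2 * qf X b := by
  simp only [qf, mulVec_smul, Pi.smul_apply, smul_eq_mul, Finset.mul_sum]
  exact Finset.sum_congr rfl fun _ _ => by ring

lemma qf_add_smul (b v : Fin p → ℝ) (t : ℝ) :
    qf X (b + t • v) = qf X b + 2 * t * ((X *ᵥ b) ⬝ᵥ (X *ᵥ v)) + t ^ 2 * qf X v := by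
  simp only [qf, dotProduct, mulVec_add, mulVec_smul, Pi.add_apply, Pi.smul_apply,
    smul_eq_mul, Finset.mul_sum, ← Finset.sum_add_distrib]
  exact Finset.sum_congr rfl fun _ _ => by ring

end QuadraticForm

lemma exists_inv_one_add_abs_sq_mul_lt {A : ℝ} (hA : 0 < A) (B : ℝ) {C : ℝ} (hC : 0 ≤ C) :
    ∃ t : ℝ, ((1 + |t|)⁻¹) ^ 2 * (A + 2 * t * B + t ^ 2 * C) < A := by
  set ε := A / (C + 1)
  have hε : 0 < ε := by positivity
  have hεC : ε * C < A := by
    rw [div_mul_eq_mul_div, div_lt_iff₀ (by positivity)]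
    nlinarith
  suffices ∃ t, |t| = ε ∧ t * B ≤ 0 by
    obtain ⟨t, habs, htB⟩ := this
    refine ⟨t, ?_⟩
    rw [inv_pow, inv_mul_lt_iff₀ (by positivity), habs, ← sq_abs t, habs]
    nlinarith [mul_lt_mul_of_pos_left hεC hε]
  rcases le_total 0 B with hB | hB
  · exact ⟨-ε, by simp [hε.le], by nlinarith⟩
  · exact ⟨ε, abs_of_pos hε, by nlinarith⟩

theorem stmt4 {n p : ℕ} (X : Matrix (Fin n) (Fin p) ℝ) (S : Finset (Fin p))
    (hpos : 0 < sInf {c : ℝ | ∃ b : Fin p → ℝ,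
        l1 (restr S b) - l1 (restr Sᶜ b) = 1 ∧ c = Real.sqrt (qf X b)})
    (bstar : Fin p → ℝ)
    (hcon : l1 (restr S bstar) - l1 (restr Sᶜ bstar) = 1)
    (hmin : ∀ b : Fin p → ℝ, l1 (restr S b) - l1 (restr Sᶜ b) = 1 →
      Real.sqrt (qf X bstar) ≤ Real.sqrt (qf X b)) :
    ∀ j ∈ S, bstar j ≠ 0 := by
  intro j hj hbj
  have hA : 0 < qf X bstar := Real.sqrt_pos.mp <| hpos.trans_le <|
    csInf_le ⟨0, by rintro _ ⟨b, -, rfl⟩; positivity⟩ ⟨bstar, hcon, rfl⟩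
  obtain ⟨t, ht⟩ := exists_inv_one_add_abs_sq_mul_lt hA
    ((X *ᵥ bstar) ⬝ᵥ (X *ᵥ Pi.single j 1)) (qf_nonneg X (Pi.single j 1))
  set b' := (1 + |t|)⁻¹ • (bstar + Pi.single j t)
  have hcon' : l1 (restr S b') - l1 (restr Sᶜ b') = 1 := by
    rw [l1_restr_sub_l1_restr_compl_smul S (by positivity),
      l1_restr_sub_l1_restr_compl_add_single hj hbj, hcon]
    exact inv_mul_cancel₀ (by positivity)
  have hlt : qf X b' < qf X bstar := by
    have hsingle : (Pi.single j t : Fin p → ℝ) = t • Pi.single j 1 := by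
      rw [← Pi.single_smul', smul_eq_mul, mul_one]
    rwa [qf_smul, hsingle, qf_add_smul]
  exact (hmin b' hcon').not_gt (Real.sqrt_lt_sqrt (qf_nonneg X b') hlt)
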